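/- Let u, v : ℝᴺ → ℝ be continuous, u ≥ v ≥ 0, with u(x) = v(x) = 0 at some point x, and suppose there exist ν ∈ ℝᴺ with |ν| = 1, r₀ > 0 and a modulus m (m(r) → 0 as r → 0⁺) such that u is differentiable on the segment (x, x − r ν) for r < r₀ with |∇u| ≤ C + m(r) on B(x, r). If v is differentiable at x with ∇v(x) = −|∇v(x)| ν, then |∇v(x)| ≤ C. -/

import Mathlib

/-!
Along the ray `t ↦ x - t • ν` both `u` and `v` vanish at `t = 0` and `v ≤ u`, so the right
slope of `v` at `0` is at most that of `u`. Since `∇v(x)` points along `-ν`, that slope of `v`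
is `‖∇v(x)‖`, while the mean value theorem bounds `u(x - r • ν) / r` by `C + m r`; let `r → 0⁺`.
-/

open Set Metric Filter Topology

section LineRestriction

variable {E F : Type*} [NormedAddCommGroup E] [NormedSpace ℝ E]
  [NormedAddCommGroup F] [NormedSpace ℝ F]

theorem HasFDerivAt.hasDerivAt_comp_sub_smul {f : E → F} {f' : E →L[ℝ] F} {x ν : E} {t : ℝ}
    (hf : HasFDerivAt f f' (x - t • ν)) :
    HasDerivAt (fun s : ℝ => f (x - s • ν)) (-f' ν) t := by
  have hline : HasDerivAt (fun s : ℝ => x - s • ν) (-ν) t := by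
    simpa using (hasDerivAt_id t).smul_const ν |>.const_sub x
  rw [← map_neg]
  exact hf.comp_hasDerivAt t hline

theorem sub_le_mul_of_norm_fderiv_le_on_segment {f : E → ℝ} {x ν : E} {r B : ℝ} (hr : 0 ≤ r)
    (hcont : ContinuousOn (fun t : ℝ => f (x - t • ν)) (Icc 0 r))
    (hdiff : ∀ t ∈ Ioo 0 r, DifferentiableAt ℝ f (x - t • ν))
    (hbound : ∀ t ∈ Ioo 0 r, ‖fderiv ℝ f (x - t • ν)‖ ≤ B) :
    f (x - r • ν) - f x ≤ B * ‖ν‖ * r := by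
  have hderiv : ∀ t ∈ Ioo 0 r,
      HasDerivAt (fun s : ℝ => f (x - s • ν)) (-fderiv ℝ f (x - t • ν) ν) t :=
    fun t ht => (hdiff t ht).hasFDerivAt.hasDerivAt_comp_sub_smul
  have hderiv_le : ∀ t ∈ interior (Icc 0 r), deriv (fun s : ℝ => f (x - s • ν)) t ≤ B * ‖ν‖ := by
    rw [interior_Icc]
    intro t ht
    rw [(hderiv t ht).deriv]
    calc -fderiv ℝ f (x - t • ν) ν ≤ ‖fderiv ℝ f (x - t • ν) ν‖ := neg_le_abs _
      _ ≤ ‖fderiv ℝ f (x - t • ν)‖ * ‖ν‖ := (fderiv ℝ f (x - t • ν)).le_opNorm ν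
      _ ≤ B * ‖ν‖ := by gcongr; exact hbound t ht
  have hdiffOn : DifferentiableOn ℝ (fun s : ℝ => f (x - s • ν)) (interior (Icc 0 r)) := by
    rw [interior_Icc]
    exact fun t ht => (hderiv t ht).differentiableAt.differentiableWithinAt
  simpa using (convex_Icc 0 r).image_sub_le_mul_sub_of_deriv_le hcont hdiffOn hderiv_le
    0 (left_mem_Icc.2 hr) r (right_mem_Icc.2 hr) hr

end LineRestriction

theorem HasDerivAt.le_of_eventually_sub_le_mul {g b : ℝ → ℝ} {L C : ℝ} (hg : HasDerivAt g L 0)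
    (hb : Tendsto b (𝓝[>] 0) (𝓝 C)) (hle : ∀ᶠ r in 𝓝[>] 0, g r - g 0 ≤ b r * r) : L ≤ C := by
  refine le_of_tendsto_of_tendsto (by simpa using hg.tendsto_slope_zero_right) hb ?_
  filter_upwards [hle, self_mem_nhdsWithin] with r hr (hr0 : 0 < r)
  rw [inv_mul_le_iff₀ hr0, mul_comm r]
  simpa using hr

theorem gradient_comparison_general {N : ℕ}
    (u v : EuclideanSpace ℝ (Fin N) → ℝ)
    (x ν : EuclideanSpace ℝ (Fin N)) (C r₀ : ℝ) (m : ℝ → ℝ)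
    (hu_cont : Continuous u)
    (hvu : ∀ y, v y ≤ u y)
    (hux : u x = 0) (hvx : v x = 0)
    (hν : ‖ν‖ = 1) (hr₀ : 0 < r₀)
    (hm : Tendsto m (nhdsWithin 0 (Set.Ioi 0)) (nhds 0))
    (hudiff : ∀ r ∈ Set.Ioo (0 : ℝ) r₀, ∀ t ∈ Set.Ioo (0 : ℝ) r,
      DifferentiableAt ℝ u (x - t • ν))
    (hubound : ∀ r ∈ Set.Ioo (0 : ℝ) r₀, ∀ t ∈ Set.Ioo (0 : ℝ) r,
      ‖fderiv ℝ u (x - t • ν)‖ ≤ C + m r)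
    (hvdiff : DifferentiableAt ℝ v x)
    (hvgrad : gradient v x = -(‖gradient v x‖) • ν) :
    ‖gradient v x‖ ≤ C := by
  have hdirectional : -(InnerProductSpace.toDual ℝ _ (gradient v x)) ν = ‖gradient v x‖ := by
    conv_lhs => rw [InnerProductSpace.toDual_apply_apply, hvgrad]
    simp [inner_smul_left, hν]
  have hv_line : HasDerivAt (fun r : ℝ => v (x - r • ν)) ‖gradient v x‖ 0 := by
    rw [← hdirectional]
    exact HasFDerivAt.hasDerivAt_comp_sub_smul (by simpa using hvdiff.hasGradientAt.hasFDerivAt)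
  refine hv_line.le_of_eventually_sub_le_mul (b := fun r => C + m r)
    (by simpa using hm.const_add C) ?_
  filter_upwards [Ioo_mem_nhdsGT hr₀] with r hr
  have hu_segment := sub_le_mul_of_norm_fderiv_le_on_segment hr.1.le
    (by fun_prop) (hudiff r hr) (hubound r hr)
  simp only [hν, mul_one, hux, sub_zero] at hu_segment
  simpa [hvx] using (hvu _).trans hu_segment

/-- Comparison-of-gradients argument: if `u ≥ v ≥ 0` vanish at `x`, `u` is
differentiable along the segment `(x, x − rν)` with `‖∇u‖ ≤ C + m(r)` there
(where `m(r) → 0` as `r → 0⁺`), and `v` is differentiable at `x` with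
`∇v(x) = −‖∇v(x)‖ ν`, then `‖∇v(x)‖ ≤ C`. -/
theorem gradient_comparison {N : ℕ}
    (u v : EuclideanSpace ℝ (Fin N) → ℝ)
    (x ν : EuclideanSpace ℝ (Fin N)) (C r₀ : ℝ) (m : ℝ → ℝ)
    (hu_cont : Continuous u) (hv_cont : Continuous v)
    (hvu : ∀ y, v y ≤ u y) (hv0 : ∀ y, 0 ≤ v y)
    (hux : u x = 0) (hvx : v x = 0)
    (hν : ‖ν‖ = 1) (hr₀ : 0 < r₀)
    (hm : Tendsto m (nhdsWithin 0 (Set.Ioi 0)) (nhds 0))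
    (hudiff : ∀ r ∈ Set.Ioo (0 : ℝ) r₀, ∀ t ∈ Set.Ioo (0 : ℝ) r,
      DifferentiableAt ℝ u (x - t • ν))
    (hubound : ∀ r ∈ Set.Ioo (0 : ℝ) r₀, ∀ t ∈ Set.Ioo (0 : ℝ) r,
      ‖fderiv ℝ u (x - t • ν)‖ ≤ C + m r)
    (hvdiff : DifferentiableAt ℝ v x)
    (hvgrad : gradient v x = -(‖gradient v x‖) • ν) :
    ‖gradient v x‖ ≤ C :=
  gradient_comparison_general u v x ν C r₀ m hu_cont hvu hux hvx hν hr₀ hm hudiff hubound hvdiff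
    hvgrad
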